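/- Let (S,𝒮) be a standard Borel space and let ν, ν′ be finite measures on S with ν′ ≪ ν, and put f := dν′/dν. For a finite measure ρ on S, let Π_ρ denote the law of the Poisson point process on S with intensity ρ, realized as a random finite counting measure: the total number of points N is Poisson with mean ρ(S), and conditionally on N = n the n points are i.i.d. with law ρ/ρ(S) (when ρ(S) > 0; if ρ(S) = 0 then Π_ρ is the Dirac mass at the empty configuration). Then Π_{ν′} ≪ Π_ν, and for Π_ν-a.e. finite configuration ξ, dΠ_{ν′}/dΠ_ν(ξ) = exp(ν(S) − ν′(S)) · ∏_{x ∈ ξ} f(x), where the product is over the points of ξ counted with multiplicity and the empty product equals 1. If moreover ν and ν′ are mutually absolutely continuous then so are Π_ν and Π_{ν′}. -/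

import Mathlib

open MeasureTheory
open scoped ENNReal NNReal

/-!
Absorbing the normalisation `ρ(S)⁻ⁿ` into the weights,
`Π_ρ = ∑ₙ e^{-ρ(S)}/n! · (x ↦ ∑ δ_{xᵢ})_* ρ^{⊗n}`. Since
`ν'^{⊗n} = ν^{⊗n}` with density `∏ f(xᵢ)` and this product is a measurable function of the
configuration `∑ δ_{xᵢ}`, the density passes through the image; the exponential factor turns the
weights `e^{-ν(S)}` into `e^{-ν'(S)}`. So `Π_{ν'} = e^{ν(S)-ν'(S)} ∏_{x∈ξ} f(x) · Π_ν`, and the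
claims follow from the Radon–Nikodym theorem for the probability measure `Π_ν`.
-/

/-- The law of the Poisson point process with finite intensity measure `ρ` on a
standard Borel space `S`, realized as a random finite counting measure via the
mixed-binomial construction: the number of points `N` is Poisson with mean `ρ(S)`
and, conditionally on `N = n`, the `n` points are i.i.d. with law `ρ/ρ(S)`
(if `ρ(S) = 0` this is the Dirac mass at the empty configuration). -/
noncomputable def poissonPP {S : Type*} [MeasurableSpace S] (ρ : Measure S) :
    Measure (Measure S) :=
  Measure.sum fun n : ℕ =>
    (ENNReal.ofReal (Real.exp (-(ρ Set.univ).toReal)) * (ρ Set.univ) ^ n / n.factorial) •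
      Measure.map (fun x : Fin n → S => ∑ i, Measure.dirac (x i))
        (Measure.pi fun _ : Fin n => (ρ Set.univ)⁻¹ • ρ)

namespace MeasureTheory

variable {S : Type*} [MeasurableSpace S]

theorem lintegral_fin_prod_eq_prod (μ : Measure S) [SigmaFinite μ] :
    ∀ {n : ℕ} {g : Fin n → S → ℝ≥0∞}, (∀ i, Measurable (g i)) →
      ∫⁻ x, ∏ i, g i (x i) ∂(Measure.pi fun _ : Fin n => μ) = ∏ i, ∫⁻ y, g i y ∂μ
  | 0, g, _ => by simp
  | n + 1, g, hg => by
    have hmp := (measurePreserving_piFinSuccAbove (fun _ : Fin (n + 1) => μ) 0).symm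
    rw [← hmp.lintegral_comp (by fun_prop)]
    simp only [MeasurableEquiv.piFinSuccAbove_symm_apply, Fin.insertNthEquiv, Equiv.coe_fn_mk,
      Fin.insertNth_zero, Fin.prod_univ_succ, Fin.cons_zero, Fin.cons_succ,
      Fin.zero_succAbove, cast_eq]
    rw [lintegral_prod_mul (g := fun y : Fin n → S => ∏ i, g i.succ (y i)) (hg 0).aemeasurable
        (Finset.measurable_prod _ fun i _ => (hg i.succ).comp (measurable_pi_apply i)).aemeasurable,
      lintegral_fin_prod_eq_prod μ fun i => hg i.succ]

namespace Measure

theorem pi_withDensity (n : ℕ) (μ : Measure S) [SigmaFinite μ] {f : S → ℝ≥0∞}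
    (hf : Measurable f) [SigmaFinite (μ.withDensity f)] :
    Measure.pi (fun _ : Fin n => μ.withDensity f)
      = (Measure.pi fun _ : Fin n => μ).withDensity fun x => ∏ i, f (x i) := by
  refine pi_eq (μ := fun _ : Fin n => μ.withDensity f) fun s hs => ?_
  have hind : (Set.univ.pi s).indicator (fun x => ∏ i, f (x i))
      = fun x => ∏ i, (s i).indicator f (x i) := by
    ext x
    by_cases h : ∀ i, x i ∈ s i
    · rw [Set.indicator_of_mem (show x ∈ Set.univ.pi s from fun i _ => h i)]
      exact Finset.prod_congr rfl fun i _ => (Set.indicator_of_mem (h i) f).symm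
    · obtain ⟨i, hi⟩ := not_forall.mp h
      rw [Set.indicator_of_notMem (show x ∉ Set.univ.pi s from fun hx => hi (hx i trivial))]
      exact (Finset.prod_eq_zero (Finset.mem_univ i) (Set.indicator_of_notMem hi f)).symm
  rw [withDensity_apply _ (.univ_pi hs), ← lintegral_indicator (.univ_pi hs), hind,
    lintegral_fin_prod_eq_prod μ fun i => hf.indicator (hs i)]
  exact Finset.prod_congr rfl fun i _ => by rw [withDensity_apply _ (hs i), lintegral_indicator (hs i)]

theorem pi_smul {ι : Type*} [Fintype ι] (c : ℝ≥0∞) (μ : Measure S) [SigmaFinite μ]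
    [SigmaFinite (c • μ)] :
    Measure.pi (fun _ : ι => c • μ) = c ^ Fintype.card ι • Measure.pi fun _ : ι => μ := by
  refine pi_eq fun s hs => ?_
  simp [pi_pi, Finset.prod_mul_distrib]

theorem map_withDensity_comp {β : Type*} [MeasurableSpace β] {T : S → β} (hT : Measurable T)
    (μ : Measure S) {g : β → ℝ≥0∞} (hg : Measurable g) :
    Measure.map T (μ.withDensity (g ∘ T)) = (Measure.map T μ).withDensity g := by
  ext s hs
  rw [withDensity_apply _ hs, map_apply hT hs, withDensity_apply _ (hT hs),
    setLIntegral_map hs hg hT, Function.comp_def]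

instance isFiniteMeasure_inv_measure_univ_smul (μ : Measure S) [IsFiniteMeasure μ] :
    IsFiniteMeasure ((μ Set.univ)⁻¹ • μ) := by
  rcases eq_zero_or_neZero μ with rfl | _
  · rw [smul_zero]; infer_instance
  · infer_instance

theorem measurable_sum_dirac (ι : Type*) [Fintype ι] :
    Measurable fun x : ι → S => ∑ i, dirac (x i) :=
  Finset.measurable_sum _ fun i _ => measurable_dirac.comp (measurable_pi_apply i)

theorem sum_dirac_apply_eq_zero_iff {ι : Type*} [Fintype ι] (x : ι → S) {A : Set S} (hA : MeasurableSet A) :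
    (∑ i, dirac (x i)) A = 0 ↔ ∀ i, x i ∉ A := by
  simp [Finset.sum_apply, dirac_apply' _ hA]

theorem lintegral_sum_dirac {ι : Type*} [Fintype ι] (x : ι → S) {g : S → ℝ≥0∞} (hg : Measurable g) :
    ∫⁻ y, g y ∂(∑ i, dirac (x i)) = ∑ i, g (x i) := by
  simp [lintegral_dirac' _ hg]

end Measure

end MeasureTheory

section PoissonPP

open Measure

variable {S : Type*} [MeasurableSpace S]

/-- `∏_{x ∈ ξ} f x` for a finite configuration `ξ`, written as `exp (∫ log f dξ)` (after handling
the zeros and infinite values of `f`) so that it is measurable in `ξ`. -/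
noncomputable def configProd (f : S → ℝ≥0∞) (ξ : Measure S) : ℝ≥0∞ :=
  if ξ (f ⁻¹' {0}) ≠ 0 then 0
  else if ξ (f ⁻¹' {∞}) ≠ 0 then ∞
  else ENNReal.ofReal (Real.exp
    ((∫⁻ y, ENNReal.ofReal (Real.log (f y).toReal) ∂ξ).toReal -
      (∫⁻ y, ENNReal.ofReal (-Real.log (f y).toReal) ∂ξ).toReal))

theorem measurable_configProd {f : S → ℝ≥0∞} (hf : Measurable f) : Measurable (configProd f) := by
  have hlog : Measurable fun y => Real.log (f y).toReal := by fun_prop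
  refine Measurable.ite ?_ measurable_const (Measurable.ite ?_ measurable_const ?_)
  · exact (measurable_coe (hf (measurableSet_singleton 0))) (measurableSet_singleton 0).compl
  · exact (measurable_coe (hf (measurableSet_singleton ∞))) (measurableSet_singleton 0).compl
  · have h₁ := measurable_lintegral (ENNReal.measurable_ofReal.comp hlog)
    have h₂ := measurable_lintegral (ENNReal.measurable_ofReal.comp hlog.neg)
    exact ENNReal.measurable_ofReal.comp (Real.measurable_exp.comp
      ((ENNReal.measurable_toReal.comp h₁).sub (ENNReal.measurable_toReal.comp h₂)))

theorem configProd_sum_dirac {f : S → ℝ≥0∞} (hf : Measurable f) {ι : Type*} [Fintype ι]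
    (x : ι → S) :
    configProd f (∑ i, dirac (x i)) = ∏ i, f (x i) := by
  simp only [configProd, ne_eq, sum_dirac_apply_eq_zero_iff x (hf (measurableSet_singleton _)),
    Set.mem_preimage, Set.mem_singleton_iff, not_forall, not_not]
  split_ifs with h0 htop
  · obtain ⟨i, hi⟩ := h0
    exact (Finset.prod_eq_zero (Finset.mem_univ i) hi).symm
  · obtain ⟨i, hi⟩ := htop
    push Not at h0
    exact (WithTop.prod_eq_top (Finset.mem_univ i) hi fun j _ => h0 j).symm
  · push Not at h0 htop
    have hpos i : 0 < (f (x i)).toReal := ENNReal.toReal_pos (h0 i) (htop i)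
    rw [lintegral_sum_dirac x (g := fun y => ENNReal.ofReal (Real.log (f y).toReal)) (by fun_prop),
      lintegral_sum_dirac x (g := fun y => ENNReal.ofReal (-Real.log (f y).toReal)) (by fun_prop),
      ENNReal.toReal_sum (fun _ _ => ENNReal.ofReal_ne_top),
      ENNReal.toReal_sum (fun _ _ => ENNReal.ofReal_ne_top), ← Finset.sum_sub_distrib]
    simp only [ENNReal.toReal_ofReal', max_zero_sub_max_neg_zero_eq_self, Real.exp_sum,
      Real.exp_log (hpos _)]
    rw [ENNReal.ofReal_prod_of_nonneg fun i _ => (hpos i).le]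
    exact Finset.prod_congr rfl fun i _ => ENNReal.ofReal_toReal (htop i)

theorem poissonPP_eq_sum_pi (ρ : Measure S) [IsFiniteMeasure ρ] :
    poissonPP ρ = Measure.sum fun n : ℕ =>
      (ENNReal.ofReal (Real.exp (-(ρ Set.univ).toReal)) / n.factorial) •
        Measure.map (fun x : Fin n → S => ∑ i, dirac (x i)) (Measure.pi fun _ : Fin n => ρ) := by
  unfold poissonPP
  congr 1
  funext n
  rcases eq_zero_or_neZero ρ with rfl | _
  · rcases n with _ | n
    · simp
    · have hpi : Measure.pi (fun _ : Fin (n + 1) => (0 : Measure S)) = 0 := by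
        rw [← measure_univ_eq_zero, pi_univ]
        simp
      simp [hpi]
  · rw [pi_smul, Fintype.card_fin, Measure.map_smul, smul_smul]
    congr 1
    rw [div_eq_mul_inv, div_eq_mul_inv, mul_right_comm, mul_assoc _ (ρ _ ^ n), ← mul_pow,
      ENNReal.mul_inv_cancel (NeZero.ne (ρ Set.univ)) (measure_ne_top ρ _), one_pow, mul_one]

instance isProbabilityMeasure_poissonPP (ρ : Measure S) [IsFiniteMeasure ρ] :
    IsProbabilityMeasure (poissonPP ρ) := by
  constructor
  -- the weights `e^{-ρ(S)} ρ(S)ⁿ / n!` are those of the Poisson law of mean `ρ(S)`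
  have h := measure_univ (μ := ProbabilityTheory.poissonMeasure (ρ Set.univ).toNNReal)
  rw [ProbabilityTheory.poissonMeasure, Measure.sum_apply _ .univ] at h
  rw [poissonPP_eq_sum_pi, Measure.sum_apply _ .univ, ← h]
  refine tsum_congr fun n => ?_
  simp only [Measure.smul_apply, map_apply (measurable_sum_dirac (Fin n)) .univ, Set.preimage_univ, pi_univ,
    Finset.prod_const, Finset.card_univ, Fintype.card_fin, dirac_apply_of_mem (Set.mem_univ n),
    smul_eq_mul, mul_one, ENNReal.coe_toNNReal_eq_toReal]
  rw [ENNReal.ofReal_div_of_pos (by positivity), ENNReal.ofReal_mul (by positivity),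
    ENNReal.ofReal_pow ENNReal.toReal_nonneg, ENNReal.ofReal_toReal (measure_ne_top ρ _),
    ENNReal.ofReal_natCast, div_eq_mul_inv, div_eq_mul_inv, mul_right_comm]

theorem map_sum_dirac_pi_absolutelyContinuous_poissonPP (ρ : Measure S) [IsFiniteMeasure ρ]
    (n : ℕ) :
    Measure.map (fun x : Fin n → S => ∑ i, dirac (x i)) (Measure.pi fun _ : Fin n => ρ)
      ≪ poissonPP ρ := by
  have hc : ENNReal.ofReal (Real.exp (-(ρ Set.univ).toReal)) / n.factorial ≠ 0 :=
    ENNReal.div_ne_zero.mpr ⟨by positivity, ENNReal.natCast_ne_top _⟩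
  rw [poissonPP_eq_sum_pi]
  exact (absolutelyContinuous_smul hc).trans (absolutelyContinuous_of_le (le_sum _ n))

theorem poissonPP_eq_withDensity (ν ν' : Measure S) [IsFiniteMeasure ν] [IsFiniteMeasure ν']
    (hac : ν' ≪ ν) :
    poissonPP ν' = (poissonPP ν).withDensity fun ξ =>
      ENNReal.ofReal (Real.exp ((ν Set.univ).toReal - (ν' Set.univ).toReal)) *
        configProd (ν'.rnDeriv ν) ξ := by
  set c := ENNReal.ofReal (Real.exp ((ν Set.univ).toReal - (ν' Set.univ).toReal))
  set f := ν'.rnDeriv ν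
  have hf : Measurable f := measurable_rnDeriv ν' ν
  have hwd : ν.withDensity f = ν' := withDensity_rnDeriv_eq ν' ν hac
  have hpi (n : ℕ) : Measure.pi (fun _ : Fin n => ν') = (Measure.pi fun _ : Fin n => ν).withDensity
      (configProd f ∘ fun x : Fin n → S => ∑ i, dirac (x i)) := by
    have : SigmaFinite (ν.withDensity f) := hwd ▸ inferInstance
    rw [← hwd, pi_withDensity n ν hf]
    congr
    funext x
    exact (configProd_sum_dirac hf x).symm
  rw [poissonPP_eq_sum_pi ν', poissonPP_eq_sum_pi ν, withDensity_sum]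
  congr 1
  funext n
  rw [withDensity_smul_measure, hpi n,
    map_withDensity_comp (measurable_sum_dirac (Fin n)) _ (measurable_configProd hf),
    show (fun ξ => c * configProd f ξ) = c • configProd f from rfl,
    withDensity_smul _ (measurable_configProd hf), smul_smul]
  congr 1
  rw [div_eq_mul_inv, div_eq_mul_inv, mul_right_comm, ← ENNReal.ofReal_mul (Real.exp_nonneg _),
    ← Real.exp_add]
  congr 3
  ring

end PoissonPP

theorem poissonPP_rnDeriv
    {S : Type*} [MeasurableSpace S]
    (ν ν' : Measure S) [IsFiniteMeasure ν] [IsFiniteMeasure ν']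
    (hac : ν' ≪ ν) :
    poissonPP ν' ≪ poissonPP ν ∧
    (∀ n : ℕ,
      ∀ᵐ x ∂(Measure.pi fun _ : Fin n => (ν Set.univ)⁻¹ • ν),
        (poissonPP ν').rnDeriv (poissonPP ν) (∑ i, Measure.dirac (x i))
          = ENNReal.ofReal (Real.exp ((ν Set.univ).toReal - (ν' Set.univ).toReal)) *
              ∏ i, ν'.rnDeriv ν (x i)) ∧
    (ν ≪ ν' → (poissonPP ν ≪ poissonPP ν' ∧ poissonPP ν' ≪ poissonPP ν)) := by
  have hkey := poissonPP_eq_withDensity ν ν' hac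
  refine ⟨hkey ▸ withDensity_absolutelyContinuous _ _, fun n => ?_, fun hac' =>
    ⟨poissonPP_eq_withDensity ν' ν hac' ▸ withDensity_absolutelyContinuous _ _,
      hkey ▸ withDensity_absolutelyContinuous _ _⟩⟩
  have hf : Measurable (ν'.rnDeriv ν) := Measure.measurable_rnDeriv ν' ν
  have hrn := hkey ▸ Measure.rnDeriv_withDensity (poissonPP ν) ((measurable_configProd hf).const_mul _)
  have hpi : (Measure.pi fun _ : Fin n => (ν Set.univ)⁻¹ • ν) ≪ Measure.pi fun _ : Fin n => ν := by
    rw [Measure.pi_smul]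
    exact Measure.smul_absolutelyContinuous
  filter_upwards [hpi (ae_of_ae_map (Measure.measurable_sum_dirac (Fin n)).aemeasurable
    ((map_sum_dirac_pi_absolutelyContinuous_poissonPP ν n).ae_le hrn))] with x hx
  rw [hx, configProd_sum_dirac hf]
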